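/- arXiv:2505.10175 — 2 statements merged into one kernel-verified Lean document; each statement's English description precedes it below -/
import Mathlib

section
/- Let $N_Q$ be binomial with parameters $N$ and $\theta$, and assume $N\theta \ge 1$. Then there is a universal constant $C$ such that $\big(\mathbb{E}\big[\big(\mathbf{1}(N_Q \neq 0)\, N_Q^{-1}\big)^2\big]\big)^{1/2} \le C/(N\theta)$. -/
open MeasureTheory ProbabilityTheory

lemma aux_exp_tail {x : ℝ} (hx : 1 ≤ x) : Real.exp (-(x / 8)) ≤ 13824 / x ^ 2 := by
  have hx0 : 0 < x := lt_of_lt_of_le one_pos hx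
  have h1 : x / 24 ≤ Real.exp (x / 24) := by
    have := Real.add_one_le_exp (x / 24)
    linarith
  have h2 : (x / 24) ^ 3 ≤ Real.exp (x / 24) ^ 3 := by
    have h0 : 0 ≤ x / 24 := by linarith
    exact pow_le_pow_left₀ h0 h1 3
  have h3 : Real.exp (x / 24) ^ 3 = Real.exp (x / 8) := by
    rw [← Real.exp_nat_mul]
    congr 1
    push_cast
    ring
  have h4 : x ^ 3 / 13824 ≤ Real.exp (x / 8) := by
    rw [← h3]
    calc x ^ 3 / 13824 = (x / 24) ^ 3 := by ring
    _ ≤ _ := h2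
  have h5 : x ^ 2 / 13824 ≤ Real.exp (x / 8) := by
    have : x ^ 2 ≤ x ^ 3 := by nlinarith
    linarith
  rw [Real.exp_neg]
  rw [inv_le_iff_one_le_mul₀ (Real.exp_pos _)]
  rw [div_mul_eq_mul_div, le_div_iff₀ (by positivity)]
  nlinarith [Real.exp_pos (x / 8)]

/-- Stochastic `L²` bound on `1(N_Q ≠ 0)/N_Q` for a binomial `N_Q`:
`(E[(1(N_Q≠0) N_Q⁻¹)²])^(1/2) ≤ C/(Nθ)` provided `Nθ ≥ 1`. -/
theorem stmt_4 :
    ∃ C : ℝ, 0 < C ∧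
      ∀ (N : ℕ) (Ω : Type) (_ : MeasureSpace Ω)
        (_ : IsProbabilityMeasure (ℙ : Measure Ω))
        (θ : ℝ), 0 ≤ θ → θ ≤ 1 →
        ∀ (A : Fin N → Set Ω), (∀ n, MeasurableSet (A n)) →
          iIndepSet A ℙ → (∀ n, ℙ (A n) = ENNReal.ofReal θ) →
          1 ≤ (N : ℝ) * θ →
          (∫ ω, (if (∑ n : Fin N, (A n).indicator (fun _ => (1 : ℝ)) ω) = 0 then 0
              else ((∑ n : Fin N, (A n).indicator (fun _ => (1 : ℝ)) ω))⁻¹) ^ 2 ∂ℙ)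
              ^ ((1 : ℝ) / 2)
            ≤ C / ((N : ℝ) * θ) := by
  refine ⟨120, by norm_num, ?_⟩
  intro N Ω _ hprob θ hθ0 hθ1 A hA hind hPA hNθ
  set X : Fin N → Ω → ℝ := fun n => (A n).indicator (fun _ => (1 : ℝ)) with hXdef
  set S : Ω → ℝ := fun ω => ∑ n : Fin N, X n ω with hSdef
  set f : Ω → ℝ := fun ω => if S ω = 0 then 0 else (S ω)⁻¹ with hfdef
  have hNθ0 : 0 < (N : ℝ) * θ := lt_of_lt_of_le one_pos hNθ
  have hXmeas : ∀ n, Measurable (X n) := fun n => measurable_const.indicator (hA n)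
  have hSmeas : Measurable S := Finset.measurable_sum _ (fun n _ => hXmeas n)
  have hX01 : ∀ n ω, X n ω = 0 ∨ X n ω = 1 := by
    intro n ω
    by_cases h : ω ∈ A n
    · right; simp [hXdef, Set.indicator_of_mem h]
    · left; simp [hXdef, Set.indicator_of_notMem h]
  have hXnonneg : ∀ n ω, 0 ≤ X n ω := fun n ω => by
    rcases hX01 n ω with h | h <;> simp [h]
  have hSnonneg : ∀ ω, 0 ≤ S ω := fun ω => Finset.sum_nonneg fun n _ => hXnonneg n ω
  have hSone : ∀ ω, S ω ≠ 0 → 1 ≤ S ω := by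
    intro ω h
    obtain ⟨n, hn⟩ : ∃ n, X n ω ≠ 0 := by
      by_contra hc
      push_neg at hc
      exact h (Finset.sum_eq_zero fun n _ => hc n)
    have h1 : X n ω = 1 := (hX01 n ω).resolve_left hn
    calc (1 : ℝ) = X n ω := h1.symm
      _ ≤ S ω := Finset.single_le_sum (fun i _ => hXnonneg i ω) (Finset.mem_univ n)
  have hf0 : ∀ ω, 0 ≤ f ω := by
    intro ω
    by_cases h : S ω = 0
    · simp [hfdef, h]
    · simp only [hfdef, if_neg h]
      exact inv_nonneg.mpr (hSnonneg ω)
  have hf1 : ∀ ω, f ω ≤ 1 := by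
    intro ω
    by_cases h : S ω = 0
    · simp [hfdef, h]
    · simp only [hfdef, if_neg h]
      exact inv_le_one_of_one_le₀ (hSone ω h)
  -- mgf of each indicator at t = -1
  have hmgfX : ∀ n, mgf (X n) ℙ (-1) = 1 + (Real.exp (-1) - 1) * θ := by
    intro n
    have hpt : (fun ω => Real.exp (-1 * X n ω))
        = fun ω => 1 + (Real.exp (-1) - 1) * X n ω := by
      funext ω
      rcases hX01 n ω with h | h <;> simp [h]
    have hXint : Integrable (X n) ℙ := (integrable_const (1 : ℝ)).indicator (hA n)
    have hXval : ∫ ω, X n ω ∂ℙ = θ := by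
      have : ∫ ω, X n ω ∂ℙ = (ℙ (A n)).toReal := by
        simpa [hXdef, measureReal_def, Pi.one_def] using integral_indicator_one (μ := (ℙ : Measure Ω)) (hA n)
      rw [this, hPA n, ENNReal.toReal_ofReal hθ0]
    rw [mgf, hpt, integral_add (integrable_const 1) (hXint.const_mul _),
      integral_const, integral_const_mul, hXval]
    simp
  have hmgfX_le : ∀ n, mgf (X n) ℙ (-1) ≤ Real.exp ((Real.exp (-1) - 1) * θ) := by
    intro n
    rw [hmgfX n]
    have := Real.add_one_le_exp ((Real.exp (-1) - 1) * θ)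
    linarith
  have hS_fun : S = ∑ n : Fin N, X n := by
    funext ω
    simp [hSdef]
  have hmgfS : mgf S ℙ (-1) ≤ Real.exp ((N : ℝ) * θ * (Real.exp (-1) - 1)) := by
    have hsum := (hind.iIndepFun_indicator).mgf_sum (t := -1) hXmeas Finset.univ
    have hmgf_eq : mgf S ℙ (-1) = ∏ n : Fin N, mgf (X n) ℙ (-1) := by
      rw [hS_fun]
      exact hsum
    rw [hmgf_eq]
    calc ∏ n : Fin N, mgf (X n) ℙ (-1)
        ≤ ∏ _n : Fin N, Real.exp ((Real.exp (-1) - 1) * θ) := by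
          apply Finset.prod_le_prod
          · exact fun n _ => mgf_nonneg
          · exact fun n _ => hmgfX_le n
      _ = Real.exp ((Real.exp (-1) - 1) * θ) ^ N := by
          simp [Finset.prod_const]
      _ = Real.exp ((N : ℝ) * ((Real.exp (-1) - 1) * θ)) := by
          rw [Real.exp_nat_mul]
      _ = Real.exp ((N : ℝ) * θ * (Real.exp (-1) - 1)) := by ring_nf
  -- Chernoff bound
  have hint : Integrable (fun ω => Real.exp (-1 * S ω)) ℙ := by
    refine (integrable_const (1 : ℝ)).mono'
      ((hSmeas.const_mul _).exp.aestronglyMeasurable) ?_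
    filter_upwards with ω
    rw [Real.norm_eq_abs, abs_of_pos (Real.exp_pos _)]
    exact Real.exp_le_one_iff.mpr (by nlinarith [hSnonneg ω])
  have hcher := measure_le_le_exp_mul_mgf (μ := (ℙ : Measure Ω)) (X := S)
    ((N : ℝ) * θ / 2) (by norm_num : (-1 : ℝ) ≤ 0) hint
  have hexp1 : (8 : ℝ) / 3 ≤ Real.exp 1 := by
    have := Real.exp_one_gt_d9
    linarith
  have hexpneg : Real.exp (-1) ≤ 3 / 8 := by
    rw [Real.exp_neg]
    rw [inv_le_comm₀ (Real.exp_pos 1) (by norm_num)]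
    linarith
  have htail : (ℙ {ω | S ω ≤ (N : ℝ) * θ / 2}).toReal ≤ 13824 / ((N : ℝ) * θ) ^ 2 := by
    calc (ℙ {ω | S ω ≤ (N : ℝ) * θ / 2}).toReal
        ≤ Real.exp (-(-1) * ((N : ℝ) * θ / 2)) * mgf S ℙ (-1) := hcher
      _ ≤ Real.exp ((N : ℝ) * θ / 2) * Real.exp ((N : ℝ) * θ * (Real.exp (-1) - 1)) := by
          rw [show (-(-1 : ℝ)) * ((N : ℝ) * θ / 2) = (N : ℝ) * θ / 2 by ring]
          exact mul_le_mul_of_nonneg_left hmgfS (Real.exp_pos _).le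
      _ = Real.exp ((N : ℝ) * θ / 2 + (N : ℝ) * θ * (Real.exp (-1) - 1)) := by
          rw [← Real.exp_add]
      _ ≤ Real.exp (-((N : ℝ) * θ / 8)) := by
          apply Real.exp_le_exp.mpr
          nlinarith
      _ ≤ 13824 / ((N : ℝ) * θ) ^ 2 := aux_exp_tail hNθ
  -- pointwise comparison
  set T : Set Ω := {ω | S ω ≤ (N : ℝ) * θ / 2} with hTdef
  have hTmeas : MeasurableSet T := hSmeas measurableSet_Iic
  set g : Ω → ℝ := fun ω => (2 / ((N : ℝ) * θ)) ^ 2 + T.indicator (fun _ => (1 : ℝ)) ω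
    with hgdef
  have hgint : Integrable g ℙ :=
    (integrable_const _).add ((integrable_const 1).indicator hTmeas)
  have hfg : ∀ ω, f ω ^ 2 ≤ g ω := by
    intro ω
    by_cases hT : ω ∈ T
    · have h1 : f ω ^ 2 ≤ 1 := by nlinarith [hf0 ω, hf1 ω]
      have h2 : T.indicator (fun _ => (1 : ℝ)) ω = 1 := Set.indicator_of_mem hT _
      rw [hgdef]
      simp only [h2]
      have : (0 : ℝ) ≤ (2 / ((N : ℝ) * θ)) ^ 2 := sq_nonneg _
      linarith
    · have hT' : (N : ℝ) * θ / 2 < S ω := not_le.mp hT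
      have hSpos : 0 < S ω := lt_trans (by positivity) hT'
      have hS0 : S ω ≠ 0 := ne_of_gt hSpos
      have hfeq : f ω = (S ω)⁻¹ := if_neg hS0
      have hfle : f ω ≤ 2 / ((N : ℝ) * θ) := by
        rw [hfeq]
        rw [inv_le_comm₀ (hSpos) (by positivity)]
        calc ((2 : ℝ) / ((N : ℝ) * θ))⁻¹ = (N : ℝ) * θ / 2 := by
              field_simp
          _ ≤ S ω := hT'.le
      have h2 : T.indicator (fun _ => (1 : ℝ)) ω = 0 := Set.indicator_of_notMem hT _
      rw [hgdef]
      simp only [h2, add_zero]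
      have hf0' := hf0 ω
      nlinarith
  have hint_f : ∫ ω, f ω ^ 2 ∂ℙ ≤ ∫ ω, g ω ∂ℙ :=
    integral_mono_of_nonneg (Filter.Eventually.of_forall fun ω => sq_nonneg _)
      hgint (Filter.Eventually.of_forall hfg)
  have hgval : ∫ ω, g ω ∂ℙ = (2 / ((N : ℝ) * θ)) ^ 2 + (ℙ T).toReal := by
    rw [hgdef]
    rw [integral_add (integrable_const _) ((integrable_const 1).indicator hTmeas),
      integral_const, probReal_univ]
    simp only [ENNReal.toReal_one, smul_eq_mul, one_mul]
    congr 1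
    simpa [measureReal_def, Pi.one_def] using integral_indicator_one (μ := (ℙ : Measure Ω)) hTmeas
  have hkey : ∫ ω, f ω ^ 2 ∂ℙ ≤ (120 / ((N : ℝ) * θ)) ^ 2 := by
    have h4 : (2 / ((N : ℝ) * θ)) ^ 2 = 4 / ((N : ℝ) * θ) ^ 2 := by
      rw [div_pow]; norm_num
    calc ∫ ω, f ω ^ 2 ∂ℙ ≤ (2 / ((N : ℝ) * θ)) ^ 2 + (ℙ T).toReal := by
          rw [← hgval]; exact hint_f
      _ ≤ 4 / ((N : ℝ) * θ) ^ 2 + 13824 / ((N : ℝ) * θ) ^ 2 := by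
          rw [h4]
          exact add_le_add_right htail _
      _ = 13828 / ((N : ℝ) * θ) ^ 2 := by ring
      _ ≤ 14400 / ((N : ℝ) * θ) ^ 2 := by
          gcongr
          norm_num
      _ = (120 / ((N : ℝ) * θ)) ^ 2 := by
          rw [div_pow]; norm_num
  have h0 : 0 ≤ ∫ ω, f ω ^ 2 ∂ℙ := integral_nonneg fun ω => sq_nonneg _
  have hrpow := Real.rpow_le_rpow h0 hkey (by norm_num : (0 : ℝ) ≤ 1 / 2)
  have hsimp : ((120 / ((N : ℝ) * θ)) ^ 2 : ℝ) ^ ((1 : ℝ) / 2) = 120 / ((N : ℝ) * θ) := by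
    rw [← Real.rpow_natCast (120 / ((N : ℝ) * θ)) 2, ← Real.rpow_mul (by positivity)]
    norm_num
  rw [hsimp] at hrpow
  exact hrpow
end

section
/- With $T_{\rho_-}$ as above, there is a universal constant $C$ such that for all $\rho_- \in [0,2]$: $\int_0^2 \big(\tfrac12(T_{\rho_-}(x) - x) + \tfrac12(T_{2-\rho_-}(x) - x)\big)^2\,dx \le C(\rho_- - 1)^4$. -/
open MeasureTheory

/-- The building-block transport map on `[0,2]`. -/
noncomputable def Tmap (ρ x : ℝ) : ℝ :=
  if x ≤ ρ ∧ ρ ≠ 0 then x / ρ else 2 - (2 - x) / (2 - ρ)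

lemma key_bound (ρ x : ℝ) (hρ0 : 0 ≤ ρ) (hρ2 : ρ ≤ 2) (hx0 : 0 ≤ x) (hx2 : x ≤ 2) :
    |((1 / 2 : ℝ) * (Tmap ρ x - x) + (1 / 2 : ℝ) * (Tmap (2 - ρ) x - x))| ≤ (ρ - 1) ^ 2 := by
  rw [abs_le]
  unfold Tmap
  rcases eq_or_lt_of_le hρ0 with h0 | h0
  · -- ρ = 0
    subst h0
    norm_num
    rw [if_pos hx2]
    constructor <;> linarith
  rcases eq_or_lt_of_le hρ2 with h2 | h2
  · -- ρ = 2
    subst h2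
    norm_num
    rw [if_pos hx2]
    constructor <;> linarith
  · have hρpos : 0 < ρ := h0
    have h2ρ : 0 < 2 - ρ := by linarith
    have hne : ρ ≠ 0 := ne_of_gt hρpos
    have hne2 : (2 - ρ) ≠ 0 := ne_of_gt h2ρ
    by_cases hA : x ≤ ρ <;> by_cases hB : x ≤ 2 - ρ
    · rw [if_pos ⟨hA, hne⟩, if_pos ⟨hB, hne2⟩]
      have e : (1 / 2 : ℝ) * (x / ρ - x) + (1 / 2 : ℝ) * (x / (2 - ρ) - x)
          = x * (ρ - 1) ^ 2 / (ρ * (2 - ρ)) := by field_simp; ring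
      rw [e]
      constructor
      · rw [neg_le, ← neg_div, div_le_iff₀ (by positivity : (0:ℝ) < ρ * (2 - ρ))]
        nlinarith [mul_nonneg hx0 (sq_nonneg (ρ - 1)),
          mul_nonneg (sq_nonneg (ρ - 1)) (mul_pos hρpos h2ρ).le]
      · rw [div_le_iff₀ (by positivity : (0:ℝ) < ρ * (2 - ρ))]
        nlinarith [mul_nonneg (sub_nonneg.2 hA) (mul_nonneg (sub_nonneg.2 hB) (sq_nonneg (ρ - 1))),
          mul_nonneg hx0 (sq_nonneg (ρ - 1)), sq_nonneg (ρ - 1)]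
    · -- x ≤ ρ, x > 2 - ρ, so ρ ≥ 1
      push_neg at hB
      rw [if_pos ⟨hA, hne⟩, if_neg (by push_neg; intro h; exact absurd h (not_le.2 hB))]
      have h22 : (2 : ℝ) - (2 - ρ) = ρ := by ring
      rw [h22]
      have e : (1 / 2 : ℝ) * (x / ρ - x) + (1 / 2 : ℝ) * (2 - (2 - x) / ρ - x)
          = (x - 1) * (1 - ρ) / ρ := by field_simp; ring
      rw [e]
      have hρ1 : 1 ≤ ρ := by linarith
      constructor
      · rw [neg_le, ← neg_div, div_le_iff₀ hρpos]
        nlinarith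
      · rw [div_le_iff₀ hρpos]
        nlinarith
    · -- x > ρ, x ≤ 2 - ρ, so ρ ≤ 1
      push_neg at hA
      rw [if_neg (by push_neg; intro h; exact absurd h (not_le.2 hA)), if_pos ⟨hB, hne2⟩]
      have e : (1 / 2 : ℝ) * (2 - (2 - x) / (2 - ρ) - x) + (1 / 2 : ℝ) * (x / (2 - ρ) - x)
          = (1 - x) * (1 - ρ) / (2 - ρ) := by field_simp; ring
      rw [e]
      have hρ1 : ρ ≤ 1 := by linarith
      constructor
      · rw [neg_le, ← neg_div, div_le_iff₀ h2ρ]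
        nlinarith
      · rw [div_le_iff₀ h2ρ]
        nlinarith
    · push_neg at hA hB
      rw [if_neg (by push_neg; intro h; exact absurd h (not_le.2 hA)),
        if_neg (by push_neg; intro h; exact absurd h (not_le.2 hB))]
      have h22 : (2 : ℝ) - (2 - ρ) = ρ := by ring
      rw [h22]
      have e : (1 / 2 : ℝ) * (2 - (2 - x) / (2 - ρ) - x) + (1 / 2 : ℝ) * (2 - (2 - x) / ρ - x)
          = (x - 2) * (ρ - 1) ^ 2 / (ρ * (2 - ρ)) := by field_simp; ring
      rw [e]
      constructor
      · rw [neg_le, ← neg_div, div_le_iff₀ (by positivity : (0:ℝ) < ρ * (2 - ρ))]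
        nlinarith [mul_nonneg (by linarith : (0:ℝ) ≤ ρ - (2 - x))
            (mul_nonneg (by linarith : (0:ℝ) ≤ (2 - ρ) - (2 - x)) (sq_nonneg (ρ - 1))),
          mul_nonneg (sub_nonneg.2 hx2) (sq_nonneg (ρ - 1)), sq_nonneg (ρ - 1)]
      · rw [div_le_iff₀ (by positivity : (0:ℝ) < ρ * (2 - ρ))]
        nlinarith [mul_nonneg (sub_nonneg.2 hx2) (sq_nonneg (ρ - 1)),
          mul_nonneg (sq_nonneg (ρ - 1)) (mul_pos hρpos h2ρ).le]

/-- Cancellation estimate: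
`∫₀² (½(T_{ρ₋}(x)-x) + ½(T_{2-ρ₋}(x)-x))² dx ≲ (ρ₋ - 1)⁴`. -/
theorem stmt_10 :
    ∃ C : ℝ, 0 < C ∧ ∀ ρ ∈ Set.Icc (0 : ℝ) 2,
      ∫ x in Set.Icc (0 : ℝ) 2,
          ((1 / 2 : ℝ) * (Tmap ρ x - x) + (1 / 2 : ℝ) * (Tmap (2 - ρ) x - x)) ^ 2
        ≤ C * (ρ - 1) ^ 4 := by
  refine ⟨3, by norm_num, fun ρ hρ => ?_⟩
  obtain ⟨hρ0, hρ2⟩ := hρ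
  have hvol : volume (Set.Icc (0 : ℝ) 2) < ⊤ := measure_Icc_lt_top
  have hC : ∀ x ∈ Set.Icc (0 : ℝ) 2,
      ‖((1 / 2 : ℝ) * (Tmap ρ x - x) + (1 / 2 : ℝ) * (Tmap (2 - ρ) x - x)) ^ 2‖
        ≤ (ρ - 1) ^ 4 := by
    intro x hx
    rw [Real.norm_eq_abs, abs_of_nonneg (sq_nonneg _)]
    have h := key_bound ρ x hρ0 hρ2 hx.1 hx.2
    rw [abs_le] at h
    nlinarith [h.1, h.2, sq_nonneg (ρ - 1)]
  have hb := norm_setIntegral_le_of_norm_le_const hvol hC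
  rw [Real.norm_eq_abs] at hb
  have := le_trans (le_abs_self _) hb
  rw [Real.volume_real_Icc] at this
  norm_num at this
  nlinarith [sq_nonneg ((ρ - 1) ^ 2), this]
end
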